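/- Define f(t) := (e^{2t}t⁴ − eᵗt⁴ − 4t³eᵗ − 4t³e^{2t} + 12t²e^{2t} − 12eᵗt² − 12eᵗ + 12e^{2t} − 4e^{3t} + 4) / (−eᵗ + 1 − 2t + t²) for t > 0. Then there exist δ > 0 and C > 0 such that for all t ∈ (0, δ), |f(t) − (t⁸/6480 + t⁹/3888 + 869t¹⁰/4082400 + 37t¹¹/326592 + 1213t¹²/29393280)| ≤ C·t¹³. In particular f(t)/t⁸ → 1/6480 as t → 0⁺. -/

import Mathlib

/-!
Let `q = fQuot` be the claimed expansion divided by `t⁸`. Replacing `eᵗ`, `e²ᵗ`, `e³ᵗ` by their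
Taylor polynomials of degree 13, the numerator of `f` minus `t⁸ q(t)` times the denominator
becomes `t¹⁴` times a polynomial plus polynomial multiples of the three Taylor remainders, so
it is `O(t¹⁴)`. The denominator is `≤ -2t` on `(0, 1]` because `eᵗ ≥ 1 + t`, so dividing by it
costs one power of `t` and `f(t) - t⁸ q(t) = O(t¹³)` as `t → 0⁺`.
-/

open Real

/-- `f(t) = det Λ(t)` as an explicit function. -/
noncomputable def f (t : ℝ) : ℝ :=
  (Real.exp (2*t) * t^4 - Real.exp t * t^4 - 4*t^3*Real.exp t - 4*t^3*Real.exp (2*t)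
    + 12*t^2*Real.exp (2*t) - 12*Real.exp t*t^2 - 12*Real.exp t + 12*Real.exp (2*t)
    - 4*Real.exp (3*t) + 4) / (-Real.exp t + 1 - 2*t + t^2)

open Filter Topology Asymptotics Finset Nat

noncomputable def expTaylorRem (n : ℕ) (x : ℝ) : ℝ := exp x - ∑ i ∈ range n, x ^ i / i !

theorem expTaylorRem_const_mul_isBigO (n : ℕ) (k : ℝ) :
    (fun t => expTaylorRem n (k * t)) =O[𝓝 0] (fun t => t ^ n) := by
  have hk : Tendsto (fun t : ℝ => k * t) (𝓝 0) (𝓝 0) := by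
    simpa using (continuous_const_mul k).tendsto 0
  refine ((Real.exp_sub_sum_range_isBigO_pow n).comp_tendsto hk).trans ?_
  simpa only [Function.comp_def, mul_pow] using isBigO_const_mul_self (k ^ n) (· ^ n) (𝓝 0)

theorem ContinuousAt.mul_isBigO {α : Type*} [TopologicalSpace α] {a g h : α → ℝ} {x : α}
    (ha : ContinuousAt a x) (hg : g =O[𝓝 x] h) : (fun y => a y * g y) =O[𝓝 x] h := by
  simpa using (ha.tendsto.isBigO_one ℝ).mul hg

noncomputable def fNum (t : ℝ) : ℝ :=
  Real.exp (2*t) * t^4 - Real.exp t * t^4 - 4*t^3*Real.exp t - 4*t^3*Real.exp (2*t)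
    + 12*t^2*Real.exp (2*t) - 12*Real.exp t*t^2 - 12*Real.exp t + 12*Real.exp (2*t)
    - 4*Real.exp (3*t) + 4

noncomputable def fDen (t : ℝ) : ℝ := -Real.exp t + 1 - 2*t + t^2

theorem f_eq_fNum_div_fDen (t : ℝ) : f t = fNum t / fDen t := rfl

noncomputable def fQuot (t : ℝ) : ℝ :=
  1/6480 + t/3888 + 869*t^2/4082400 + 37*t^3/326592 + 1213*t^4/29393280

-- `fNum - t⁸ fQuot fDen`, with each exponential replaced by its degree-13 Taylor
-- polynomial, divided by `t¹⁴`.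
noncomputable def numerTail (t : ℝ) : ℝ :=
  (609947/3233260800) + (58778641/1260971712000)*t^1 + (31777789/5043886848000)*t^2
    + (32936047/17653603968000)*t^3 + (15893/185177664000)*t^4 + (42221/3621252096000)*t^5
    + (19027/13579695360000)*t^6 + (1437929/9532946142720000)*t^7
    + (560393/38131784570880000)*t^8 + (18089/13866103480320000)*t^9
    + (19099/183032565940224000)*t^10 + (1213/183032565940224000)*t^11

theorem fNum_sub_fDen_mul_eq (t : ℝ) :
    fNum t - t ^ 8 * fQuot t * fDen t = numerTail t * t ^ 14
      + (t ^ 8 * fQuot t - t^4 - 4*t^3 - 12*t^2 - 12) * expTaylorRem 14 t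
      + (t^4 - 4*t^3 + 12*t^2 + 12) * expTaylorRem 14 (2 * t)
      - 4 * expTaylorRem 14 (3 * t) := by
  simp only [fNum, fDen, fQuot, numerTail, expTaylorRem, sum_range_succ, sum_range_zero,
    Nat.factorial]
  push_cast
  ring

theorem fNum_sub_fDen_mul_isBigO :
    (fun t => fNum t - t ^ 8 * fQuot t * fDen t) =O[𝓝 0] (fun t => t ^ 14) := by
  have hR1 : (fun t => expTaylorRem 14 t) =O[𝓝 0] (fun t => t ^ 14) := by
    simpa using expTaylorRem_const_mul_isBigO 14 1
  simp only [fNum_sub_fDen_mul_eq]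
  refine (((ContinuousAt.mul_isBigO (by unfold numerTail; fun_prop) (isBigO_refl _ _)).add
    (ContinuousAt.mul_isBigO (by unfold fQuot; fun_prop) hR1)).add
    (ContinuousAt.mul_isBigO (by fun_prop) (expTaylorRem_const_mul_isBigO 14 2))).sub
    (continuousAt_const.mul_isBigO (expTaylorRem_const_mul_isBigO 14 3))

theorem fDen_le_neg_two_mul {t : ℝ} (ht0 : 0 ≤ t) (ht1 : t ≤ 1) : fDen t ≤ -2 * t := by
  unfold fDen
  nlinarith [add_one_le_exp t]

theorem isBigO_id_fDen : (fun t => t) =O[𝓝[>] 0] fDen := by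
  refine .of_bound 1 ?_
  filter_upwards [Ioo_mem_nhdsGT one_pos] with t ⟨ht0, ht1⟩
  have := fDen_le_neg_two_mul ht0.le ht1.le
  rw [norm_eq_abs, norm_eq_abs, abs_of_pos ht0, abs_of_neg (by linarith)]
  linarith

theorem f_sub_isBigO : (fun t => f t - t ^ 8 * fQuot t) =O[𝓝[>] 0] (fun t => t ^ 13) := by
  have hD : (fun t => (fDen t)⁻¹) =O[𝓝[>] 0] (fun t => t⁻¹) :=
    isBigO_id_fDen.inv_rev (.of_forall fun t ht => by simp [fDen, ht])
  refine ((fNum_sub_fDen_mul_isBigO.mono nhdsWithin_le_nhds).mul hD).congr' ?_ ?_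
  · filter_upwards [Ioo_mem_nhdsGT one_pos] with t ⟨ht0, ht1⟩
    have : fDen t ≠ 0 := by linarith [fDen_le_neg_two_mul ht0.le ht1.le]
    rw [f_eq_fNum_div_fDen]
    field_simp
  · filter_upwards [self_mem_nhdsWithin] with t (ht : 0 < t)
    field_simp

theorem tendsto_f_div_pow_eight :
    Tendsto (fun t => f t / t ^ 8) (𝓝[>] 0) (𝓝 (1 / 6480)) := by
  have hO : (fun t => f t / t ^ 8 - fQuot t) =O[𝓝[>] 0] (fun t => t ^ 5) := by
    refine (f_sub_isBigO.mul (isBigO_refl (fun t => (t ^ 8)⁻¹) _)).congr' ?_ ?_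
    · filter_upwards [self_mem_nhdsWithin] with t (ht : 0 < t)
      field_simp
    · filter_upwards [self_mem_nhdsWithin] with t (ht : 0 < t)
      field_simp
  have h5 : Tendsto (fun t : ℝ => t ^ 5) (𝓝[>] 0) (𝓝 0) :=
    ((continuous_pow 5).tendsto' 0 0 (by simp)).mono_left nhdsWithin_le_nhds
  have hq : Tendsto fQuot (𝓝[>] 0) (𝓝 (1 / 6480)) := by
    refine ((show Continuous fQuot by unfold fQuot; fun_prop).tendsto' 0 _ ?_).mono_left
      nhdsWithin_le_nhds
    simp [fQuot]
  simpa using (hO.trans_tendsto h5).add hq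

theorem f_expansion :
    (∃ δ > (0:ℝ), ∃ C > (0:ℝ), ∀ t ∈ Set.Ioo (0:ℝ) δ,
      |f t - (t^8/6480 + t^9/3888 + 869*t^10/4082400 + 37*t^11/326592 + 1213*t^12/29393280)|
        ≤ C * t^13) ∧
    Filter.Tendsto (fun t => f t / t^8) (nhdsWithin 0 (Set.Ioi 0)) (nhds (1/6480)) := by
  refine ⟨?_, tendsto_f_div_pow_eight⟩
  obtain ⟨C, hC, hCO⟩ := f_sub_isBigO.exists_pos
  obtain ⟨δ, hδ, hδC⟩ := mem_nhdsGT_iff_exists_Ioo_subset.1 hCO.bound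
  refine ⟨δ, hδ, C, hC, fun t ht => ?_⟩
  have hfq : t ^ 8 * fQuot t =
      t^8/6480 + t^9/3888 + 869*t^10/4082400 + 37*t^11/326592 + 1213*t^12/29393280 := by
    unfold fQuot; ring
  simpa [hfq, abs_of_pos ht.1] using hδC ht
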